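/- Under the inversive-plane setup below, the set X₅ is a subgroup of the multiplicative group ℝ^× of nonzero real numbers, each of the sets Y₂, Y₃ and X₄ is a coset of X₅ in ℝ^×, and moreover x⁴ ∈ X₅ for every x ∈ X₄ ∪ Y₂ ∪ Y₃. -/

import Mathlib

open OnePoint

/-- A generalized circle in the inversive plane `ℝ² ∪ {∞}` (modeled as `OnePoint ℂ`):
either a Euclidean circle, or an affine line together with the point at infinity. -/
def IsGenCircle (S : Set (OnePoint ℂ)) : Prop :=
  (∃ c : ℂ, ∃ r : ℝ, 0 < r ∧
      S = (fun z : ℂ => (z : OnePoint ℂ)) '' {z : ℂ | ‖z - c‖ = r}) ∨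
  (∃ z₀ e : ℂ, e ≠ 0 ∧
      S = (fun z : ℂ => (z : OnePoint ℂ)) '' {z : ℂ | ∃ t : ℝ, z = z₀ + (t : ℂ) * e} ∪ {∞})

/-- The signed norm on `ℝ² ≅ ℂ`. -/
noncomputable def signedNorm (z : ℂ) : ℝ :=
  if 0 < z.im ∨ (z.im = 0 ∧ 0 ≤ z.re) then ‖z‖ else -‖z‖

/-- The set of signed norms of points of the `X`-axis having color `i`. -/
noncomputable def xAxisColorSet (Γ : OnePoint ℂ → ℕ) (i : ℕ) : Set ℝ :=
  signedNorm '' {z : ℂ | z.im = 0 ∧ Γ (z : OnePoint ℂ) = i}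

/-- The set of signed norms of points of the line through the origin with direction `d`
having color `j`. -/
noncomputable def lineColorSet (Γ : OnePoint ℂ → ℕ) (d : ℂ) (j : ℕ) : Set ℝ :=
  signedNorm '' {z : ℂ | (∃ t : ℝ, z = (t : ℂ) * d) ∧ Γ (z : OnePoint ℂ) = j}

/-! Parametrize ℓ by signed norm (`linePoint`). By the power of the origin, axis points `x₁, x₂`
and points of ℓ with signed norms `s₁, s₂` are concyclic as soon as `x₁ x₂ = s₁ s₂`. Since a circle
carries at most three colours, the colouring of the axis is invariant under every inversion
`x ↦ u v / x` with `u ∈ Y₂, v ∈ Y₃`, and that of ℓ under every `s ↦ p q / s` with `p ∈ X₄, q ∈ X₅`.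
Composing two such inversions shows that both colourings are invariant under multiplication by
`X₅`, which gives the subgroup and the cosets. For the fourth powers: `u v ∈ X₅` and
`p / y² ∈ X₅` for `p ∈ X₄`, `y ∈ Y₂ ∪ Y₃` (as `p / y` has the colour of `y`), hence `p² ∈ X₅`. -/

open Pointwise

lemma signedNorm_of_im_pos {z : ℂ} (hz : 0 < z.im) : signedNorm z = ‖z‖ :=
  if_pos (Or.inl hz)

lemma signedNorm_of_im_neg {z : ℂ} (hz : z.im < 0) : signedNorm z = -‖z‖ :=
  if_neg (by rintro (h | ⟨h, -⟩) <;> linarith)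

lemma signedNorm_ofReal (x : ℝ) : signedNorm x = x := by
  rcases le_or_gt 0 x with hx | hx
  · simp [signedNorm, hx, abs_of_nonneg hx]
  · simp [signedNorm, hx.not_ge, abs_of_neg hx]

lemma signedNorm_sq (z : ℂ) : signedNorm z ^ 2 = ‖z‖ ^ 2 := by
  unfold signedNorm; split_ifs <;> ring

lemma signedNorm_ne_zero {z : ℂ} (hz : z ≠ 0) : signedNorm z ≠ 0 := by
  rw [← pow_ne_zero_iff two_ne_zero, signedNorm_sq]; positivity

lemma signedNorm_ofReal_mul {d : ℂ} (hd : d.im ≠ 0) (t : ℝ) :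
    signedNorm (t * d) = t * signedNorm d := by
  have him : ((t : ℂ) * d).im = t * d.im := by simp
  have hnorm : ‖(t : ℂ) * d‖ = |t| * ‖d‖ := by simp
  rcases eq_or_ne t 0 with rfl | ht
  · simp [signedNorm]
  rcases ht.lt_or_gt with ht | ht <;> rcases hd.lt_or_gt with hd' | hd'
  · rw [signedNorm_of_im_pos (by nlinarith), signedNorm_of_im_neg hd', hnorm, abs_of_neg ht]; ring
  · rw [signedNorm_of_im_neg (by nlinarith), signedNorm_of_im_pos hd', hnorm, abs_of_neg ht]; ring
  · rw [signedNorm_of_im_neg (by nlinarith), signedNorm_of_im_neg hd', hnorm, abs_of_pos ht]; ring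
  · rw [signedNorm_of_im_pos (by nlinarith), signedNorm_of_im_pos hd', hnorm, abs_of_pos ht]

noncomputable def linePoint (d : ℂ) (s : ℝ) : ℂ := ((s / signedNorm d : ℝ) : ℂ) * d

lemma linePoint_zero (d : ℂ) : linePoint d 0 = 0 := by simp [linePoint]

lemma signedNorm_linePoint {d : ℂ} (hd : d.im ≠ 0) (s : ℝ) : signedNorm (linePoint d s) = s := by
  have : d ≠ 0 := ne_of_apply_ne Complex.im hd
  rw [linePoint, signedNorm_ofReal_mul hd, div_mul_cancel₀ _ (signedNorm_ne_zero this)]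

lemma linePoint_signedNorm {d : ℂ} (hd : d.im ≠ 0) (t : ℝ) :
    linePoint d (signedNorm (t * d)) = t * d := by
  have : d ≠ 0 := ne_of_apply_ne Complex.im hd
  rw [linePoint, signedNorm_ofReal_mul hd, mul_div_cancel_right₀ _ (signedNorm_ne_zero this)]

lemma xAxisColorSet_eq (Γ : OnePoint ℂ → ℕ) (i : ℕ) :
    xAxisColorSet Γ i = {x : ℝ | Γ (x : ℂ) = i} := by
  ext x
  constructor
  · rintro ⟨z, ⟨hz, hΓ⟩, rfl⟩
    obtain ⟨x, rfl⟩ : ∃ x : ℝ, (x : ℂ) = z := ⟨z.re, Complex.ext (by simp) (by simp [hz])⟩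
    rwa [signedNorm_ofReal]
  · exact fun hx => ⟨x, ⟨Complex.ofReal_im x, hx⟩, signedNorm_ofReal x⟩

lemma lineColorSet_eq (Γ : OnePoint ℂ → ℕ) {d : ℂ} (hd : d.im ≠ 0) (j : ℕ) :
    lineColorSet Γ d j = {s : ℝ | Γ (linePoint d s) = j} := by
  ext s
  constructor
  · rintro ⟨z, ⟨⟨t, rfl⟩, hΓ⟩, rfl⟩
    rwa [Set.mem_ofPred_eq, linePoint_signedNorm hd]
  · exact fun hs => ⟨linePoint d s, ⟨⟨_, rfl⟩, hs⟩, signedNorm_linePoint hd s⟩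

lemma exists_isGenCircle_of_mul_eq {d : ℂ} (hd : d.im ≠ 0) {x₁ x₂ t₁ t₂ : ℝ}
    (h : x₁ * x₂ = t₁ * t₂ * ‖d‖ ^ 2) (hne : x₁ ≠ x₂ ∨ t₁ ≠ t₂) :
    ∃ S, IsGenCircle S ∧ ((x₁ : ℂ) : OnePoint ℂ) ∈ S ∧ ((x₂ : ℂ) : OnePoint ℂ) ∈ S ∧
      ((t₁ * d : ℂ) : OnePoint ℂ) ∈ S ∧ ((t₂ * d : ℂ) : OnePoint ℂ) ∈ S := by
  have hk : ‖d‖ ^ 2 = d.re ^ 2 + d.im ^ 2 := by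
    rw [Complex.sq_norm, Complex.normSq_apply]; ring
  set c : ℂ := ⟨(x₁ + x₂) / 2, ((t₁ + t₂) / 2 * ‖d‖ ^ 2 - (x₁ + x₂) / 2 * d.re) / d.im⟩
  set ρ : ℝ := ‖c‖ ^ 2 - x₁ * x₂
  have hreal (x : ℝ) : ‖(x : ℂ) - c‖ ^ 2 - ρ = (x - x₁) * (x - x₂) := by
    simp only [ρ, c, Complex.sq_norm, Complex.normSq_apply, Complex.sub_re, Complex.ofReal_re,
      Complex.sub_im, Complex.ofReal_im]
    ring
  have hline (t : ℝ) : ‖(t : ℂ) * d - c‖ ^ 2 - ρ = ‖d‖ ^ 2 * ((t - t₁) * (t - t₂)) := by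
    rw [hk] at h
    simp only [ρ, c, Complex.sq_norm, Complex.normSq_apply, Complex.sub_re, Complex.mul_re,
      Complex.ofReal_re, Complex.ofReal_im, Complex.sub_im, Complex.mul_im]
    field_simp
    linear_combination 4 * d.im ^ 2 * h
  have hρ : 0 < ρ := by
    by_contra! hρ
    have hx := hreal ((x₁ + x₂) / 2)
    have ht := hline ((t₁ + t₂) / 2)
    have hd0 : 0 < ‖d‖ ^ 2 := by
      have : d ≠ 0 := ne_of_apply_ne Complex.im hd
      positivity
    rcases hne with hne | hne
    · have := sq_pos_of_ne_zero (sub_ne_zero.2 hne)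
      nlinarith [sq_nonneg ‖((x₁ + x₂) / 2 : ℝ) - c‖]
    · have := mul_pos hd0 (sq_pos_of_ne_zero (sub_ne_zero.2 hne))
      nlinarith [sq_nonneg ‖(((t₁ + t₂) / 2 : ℝ) : ℂ) * d - c‖]
  have mem (z : ℂ) (hz : ‖z - c‖ ^ 2 - ρ = 0) :
      (z : OnePoint ℂ) ∈ (fun z : ℂ => (z : OnePoint ℂ)) '' {z : ℂ | ‖z - c‖ = √ρ} :=
    ⟨z, by rw [Set.mem_ofPred_eq, ← sub_eq_zero.mp hz, Real.sqrt_sq (norm_nonneg _)], rfl⟩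
  refine ⟨_, Or.inl ⟨c, √ρ, Real.sqrt_pos.mpr hρ, rfl⟩, mem _ ?_, mem _ ?_, mem _ ?_, mem _ ?_⟩
  · rw [hreal]; ring
  · rw [hreal]; ring
  · rw [hline]; ring
  · rw [hline]; ring

lemma exists_isGenCircle_linePoint {d : ℂ} (hd : d.im ≠ 0) {x₁ x₂ s₁ s₂ : ℝ}
    (h : x₁ * x₂ = s₁ * s₂) (hne : x₁ ≠ x₂ ∨ s₁ ≠ s₂) :
    ∃ S, IsGenCircle S ∧ ((x₁ : ℂ) : OnePoint ℂ) ∈ S ∧ ((x₂ : ℂ) : OnePoint ℂ) ∈ S ∧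
      (linePoint d s₁ : OnePoint ℂ) ∈ S ∧ (linePoint d s₂ : OnePoint ℂ) ∈ S := by
  have hσ : signedNorm d ≠ 0 := signedNorm_ne_zero (ne_of_apply_ne Complex.im hd)
  refine exists_isGenCircle_of_mul_eq hd ?_ ?_
  · rw [← signedNorm_sq, h]; field_simp
  · refine hne.imp_right fun hs heq => hs ?_
    rwa [div_left_inj' hσ] at heq

lemma apply_eq_of_mem_isGenCircle {α : Type*} {Γ : OnePoint ℂ → α}
    (hfin : (Set.range Γ).Finite) (h3 : ∀ S, IsGenCircle S → (Γ '' S).ncard ≤ 3)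
    {S : Set (OnePoint ℂ)} (hS : IsGenCircle S) {A : Set α} {z₁ z₂ w₁ w₂ : OnePoint ℂ}
    (hz₁ : z₁ ∈ S) (hz₂ : z₂ ∈ S) (hw₁ : w₁ ∈ S) (hw₂ : w₂ ∈ S)
    (hA₁ : Γ z₁ ∈ A) (hA₂ : Γ z₂ ∈ A) (hB₁ : Γ w₁ ∉ A) (hB₂ : Γ w₂ ∉ A) (hw : Γ w₁ ≠ Γ w₂) :
    Γ z₁ = Γ z₂ := by
  by_contra hz
  have hcard : ({Γ z₁, Γ z₂, Γ w₁, Γ w₂} : Set α).ncard = 4 := by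
    have hB (z) (hz : Γ z ∈ A) : Γ z ∉ ({Γ w₁, Γ w₂} : Set α) := by
      rintro (h | h) <;> simp_all
    rw [Set.ncard_insert_of_notMem, Set.ncard_insert_of_notMem (hB z₂ hA₂), Set.ncard_pair hw]
    rintro (h | h)
    · exact hz h
    · exact hB z₁ hA₁ h
  have hsub : ({Γ z₁, Γ z₂, Γ w₁, Γ w₂} : Set α) ⊆ Γ '' S := by
    simp only [Set.insert_subset_iff, Set.singleton_subset_iff]
    exact ⟨⟨_, hz₁, rfl⟩, ⟨_, hz₂, rfl⟩, ⟨_, hw₁, rfl⟩, ⟨_, hw₂, rfl⟩⟩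
  have := Set.ncard_le_ncard hsub (hfin.subset (Set.image_subset_range Γ S))
  linarith [h3 S hS]

def InversionInvariant {β : Type*} (c : ℝ → β) (P : Set ℝ) : Prop :=
  ∀ x y, x * y ∈ P → c x = c y

lemma InversionInvariant.apply_mul_div {β : Type*} {c : ℝ → β} {P : Set ℝ}
    (hc : InversionInvariant c P) {r s : ℝ} (hr : r ∈ P) (hs : s ∈ P) (hs0 : s ≠ 0) (x : ℝ) :
    c (x * r / s) = c x := by
  rcases eq_or_ne x 0 with rfl | hx
  · simp
  calc c (x * r / s) = c (s / x) := (hc _ _ (by field_simp; exact hr)).symm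
    _ = c x := (hc _ _ (by field_simp; exact hs)).symm

lemma inversionInvariant_axis {α : Type*} {Γ : OnePoint ℂ → α}
    (hfin : (Set.range Γ).Finite) (h3 : ∀ S, IsGenCircle S → (Γ '' S).ncard ≤ 3)
    {d : ℂ} (hd : d.im ≠ 0) {A : Set α} (hA : ∀ x : ℝ, Γ (x : ℂ) ∈ A) {j j' : α}
    (hj : j ∉ A) (hj' : j' ∉ A) (hjj' : j ≠ j') :
    InversionInvariant (fun x : ℝ => Γ (x : ℂ))
      ((fun s => Γ (linePoint d s)) ⁻¹' {j} * (fun s => Γ (linePoint d s)) ⁻¹' {j'}) := by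
  rintro x₁ x₂ ⟨s₁, hs₁, s₂, hs₂, hs⟩
  rcases eq_or_ne x₁ x₂ with rfl | hx
  · rfl
  obtain ⟨S, hS, h₁, h₂, h₃, h₄⟩ := exists_isGenCircle_linePoint hd hs.symm (Or.inl hx)
  refine apply_eq_of_mem_isGenCircle hfin h3 hS h₁ h₂ h₃ h₄ (hA x₁) (hA x₂) ?_ ?_ ?_
  all_goals simp_all

lemma inversionInvariant_line {α : Type*} {Γ : OnePoint ℂ → α}
    (hfin : (Set.range Γ).Finite) (h3 : ∀ S, IsGenCircle S → (Γ '' S).ncard ≤ 3)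
    {d : ℂ} (hd : d.im ≠ 0) {A : Set α} (hA : ∀ s : ℝ, Γ (linePoint d s) ∈ A) {i i' : α}
    (hi : i ∉ A) (hi' : i' ∉ A) (hii' : i ≠ i') :
    InversionInvariant (fun s => Γ (linePoint d s))
      ((fun x : ℝ => Γ (x : ℂ)) ⁻¹' {i} * (fun x : ℝ => Γ (x : ℂ)) ⁻¹' {i'}) := by
  rintro s₁ s₂ ⟨x₁, hx₁, x₂, hx₂, hx⟩
  rcases eq_or_ne s₁ s₂ with rfl | hs
  · rfl
  obtain ⟨S, hS, h₁, h₂, h₃, h₄⟩ := exists_isGenCircle_linePoint hd hx (Or.inr hs)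
  refine apply_eq_of_mem_isGenCircle hfin h3 hS h₃ h₄ h₁ h₂ (hA s₁) (hA s₂) ?_ ?_ ?_
  all_goals simp_all

lemma setOf_eq_image_mul {β : Type*} {c : ℝ → β} {H : Set ℝ} {y₀ : ℝ} {j : β} (hy₀ : y₀ ≠ 0)
    (hmul : ∀ q ∈ H, c (y₀ * q) = j) (hdiv : ∀ y, c y = j → y / y₀ ∈ H) :
    {y | c y = j} = (fun g => y₀ * g) '' H := by
  ext y
  constructor
  · exact fun hy => ⟨y / y₀, hdiv y hy, mul_div_cancel₀ y hy₀⟩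
  · rintro ⟨q, hq, rfl⟩
    exact hmul q hq

/-- `G` colours the X-axis and `F` colours ℓ, both by signed norm. -/
structure AxisLineRules (G F : ℝ → ℕ) : Prop where
  G_zero : G 0 = 1
  G_one : G 1 = 5
  F_zero : F 0 = 1
  exists_G_eq_four : ∃ a, G a = 4
  exists_F_eq_two : ∃ u, F u = 2
  exists_F_eq_three : ∃ v, F v = 3
  G_inv : InversionInvariant G (F ⁻¹' {2} * F ⁻¹' {3})
  F_inv : InversionInvariant F (G ⁻¹' {4} * G ⁻¹' {5})

namespace AxisLineRules

variable {G F : ℝ → ℕ} {x y y' q p p' : ℝ} {i j : ℕ}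

lemma ne_zero_of_G_eq (h : AxisLineRules G F) (hx : G x = i) (hi : i ≠ 1) : x ≠ 0 := by
  rintro rfl
  exact hi (hx.symm.trans h.G_zero)

lemma ne_zero_of_F_eq (h : AxisLineRules G F) (hy : F y = 2 ∨ F y = 3) : y ≠ 0 := by
  rintro rfl
  rw [h.F_zero] at hy
  omega

lemma F_mul_of_G_eq_five (h : AxisLineRules G F) (hq : G q = 5) (y : ℝ) : F (y * q) = F y := by
  obtain ⟨a, ha⟩ := h.exists_G_eq_four
  have ha0 := h.ne_zero_of_G_eq ha (by decide)
  calc F (y * q) = F (y * (a * q) / (a * 1)) := by congr 1; field_simp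
    _ = F y := h.F_inv.apply_mul_div ⟨a, ha, q, hq, rfl⟩ ⟨a, ha, 1, h.G_one, rfl⟩ (by simpa) y

lemma F_mul_div_of_G_eq_four (h : AxisLineRules G F) (hp : G p = 4) (hp' : G p' = 4)
    (y : ℝ) : F (y * p' / p) = F y := by
  have hp0 := h.ne_zero_of_G_eq hp (by decide)
  calc F (y * p' / p) = F (y * (p' * 1) / (p * 1)) := by simp
    _ = F y := h.F_inv.apply_mul_div ⟨p', hp', 1, h.G_one, rfl⟩ ⟨p, hp, 1, h.G_one, rfl⟩
        (by simpa) y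

lemma G_mul_div_of_F_eq (h : AxisLineRules G F) (hy : F y = 2 ∨ F y = 3) (hy' : F y' = F y)
    (x : ℝ) : G (x * y' / y) = G x := by
  obtain ⟨u, hu⟩ := h.exists_F_eq_two
  obtain ⟨v, hv⟩ := h.exists_F_eq_three
  have hu0 := h.ne_zero_of_F_eq (Or.inl hu)
  have hv0 := h.ne_zero_of_F_eq (Or.inr hv)
  have hy0 := h.ne_zero_of_F_eq hy
  rcases hy with hy | hy
  · calc G (x * y' / y) = G (x * (y' * v) / (y * v)) := by congr 1; field_simp
      _ = G x := h.G_inv.apply_mul_div ⟨y', hy'.trans hy, v, hv, rfl⟩ ⟨y, hy, v, hv, rfl⟩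
          (mul_ne_zero hy0 hv0) x
  · calc G (x * y' / y) = G (x * (u * y') / (u * y)) := by congr 1; field_simp
      _ = G x := h.G_inv.apply_mul_div ⟨u, hu, y', hy'.trans hy, rfl⟩ ⟨u, hu, y, hy, rfl⟩
          (mul_ne_zero hu0 hy0) x

lemma G_mul_of_G_eq_five (h : AxisLineRules G F) (hq : G q = 5) (x : ℝ) : G (x * q) = G x := by
  obtain ⟨u, hu⟩ := h.exists_F_eq_two
  have hu0 := h.ne_zero_of_F_eq (Or.inl hu)
  calc G (x * q) = G (x * (u * q) / u) := by congr 1; field_simp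
    _ = G x := h.G_mul_div_of_F_eq (Or.inl hu) (h.F_mul_of_G_eq_five hq u) x

lemma G_mul_div_of_G_eq_four (h : AxisLineRules G F) (hp : G p = 4) (hp' : G p' = 4)
    (x : ℝ) : G (x * p' / p) = G x := by
  obtain ⟨u, hu⟩ := h.exists_F_eq_two
  have hu0 := h.ne_zero_of_F_eq (Or.inl hu)
  calc G (x * p' / p) = G (x * (u * p' / p) / u) := by congr 1; field_simp
    _ = G x := h.G_mul_div_of_F_eq (Or.inl hu) (h.F_mul_div_of_G_eq_four hp hp' u) x

lemma G_mul_eq_five (h : AxisLineRules G F) (hx : G x = 5) (hy : G y = 5) : G (x * y) = 5 :=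
  (h.G_mul_of_G_eq_five hy x).trans hx

lemma G_inv_eq_five (h : AxisLineRules G F) (hx : G x = 5) : G x⁻¹ = 5 := by
  have := h.G_mul_of_G_eq_five hx x⁻¹
  rwa [inv_mul_cancel₀ (h.ne_zero_of_G_eq hx (by decide)), h.G_one, eq_comm] at this

lemma G_div_eq_five (h : AxisLineRules G F) (hx : G x = 5) (hy : G y = 5) : G (x / y) = 5 :=
  h.G_mul_eq_five hx (h.G_inv_eq_five hy)

lemma G_pow_eq_five (h : AxisLineRules G F) (hx : G x = 5) (n : ℕ) : G (x ^ n) = 5 := by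
  induction n with
  | zero => simpa using h.G_one
  | succ n ih => simpa [pow_succ] using h.G_mul_eq_five ih hx

lemma G_div_eq_five_of_F_eq (h : AxisLineRules G F) (hy : F y = 2 ∨ F y = 3)
    (hy' : F y' = F y) : G (y' / y) = 5 := by
  simpa [h.G_one] using h.G_mul_div_of_F_eq hy hy' 1

lemma G_div_eq_five_of_G_eq_four (h : AxisLineRules G F) (hp : G p = 4) (hp' : G p' = 4) :
    G (p' / p) = 5 := by
  simpa [h.G_one] using h.G_mul_div_of_G_eq_four hp hp' 1

lemma setOf_F_eq (h : AxisLineRules G F) (hj : j = 2 ∨ j = 3) (hy : F y = j) :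
    {t | F t = j} = (fun g => y * g) '' {x | G x = 5} := by
  subst hy
  exact setOf_eq_image_mul (h.ne_zero_of_F_eq hj) (fun q hq => h.F_mul_of_G_eq_five hq y)
    fun t ht => h.G_div_eq_five_of_F_eq hj ht

lemma setOf_G_eq_four (h : AxisLineRules G F) (hp : G p = 4) :
    {x | G x = 4} = (fun g => p * g) '' {x | G x = 5} := by
  exact setOf_eq_image_mul (h.ne_zero_of_G_eq hp (by decide))
    (fun q hq => (h.G_mul_of_G_eq_five hq p).trans hp) fun x hx => h.G_div_eq_five_of_G_eq_four hp hx

lemma G_div_sq_eq_five (h : AxisLineRules G F) (hp : G p = 4) (hy : F y = 2 ∨ F y = 3) :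
    G (p / y ^ 2) = 5 := by
  have hy0 := h.ne_zero_of_F_eq hy
  have hpy : F (p / y) = F y := h.F_inv _ _ ⟨p, hp, 1, h.G_one, by field_simp⟩
  simpa [div_div, sq] using h.G_div_eq_five_of_F_eq hy hpy

lemma G_sq_eq_five_of_G_eq_four (h : AxisLineRules G F) (hp : G p = 4) : G (p ^ 2) = 5 := by
  obtain ⟨u, hu⟩ := h.exists_F_eq_two
  obtain ⟨v, hv⟩ := h.exists_F_eq_three
  have hu0 := h.ne_zero_of_F_eq (Or.inl hu)
  have hv0 := h.ne_zero_of_F_eq (Or.inr hv)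
  have huv : G (u * v) = 5 := (h.G_inv 1 (u * v) ⟨u, hu, v, hv, by ring⟩).symm.trans h.G_one
  have key := h.G_mul_eq_five (h.G_pow_eq_five huv 2)
    (h.G_mul_eq_five (h.G_div_sq_eq_five hp (Or.inl hu)) (h.G_div_sq_eq_five hp (Or.inr hv)))
  rwa [show (u * v) ^ 2 * (p / u ^ 2 * (p / v ^ 2)) = p ^ 2 by field_simp] at key

lemma G_pow_four_of_G_eq_four (h : AxisLineRules G F) (hp : G p = 4) : G (p ^ 4) = 5 := by
  simpa [← pow_mul] using h.G_pow_eq_five (h.G_sq_eq_five_of_G_eq_four hp) 2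

lemma G_pow_four_of_F_eq (h : AxisLineRules G F) (hy : F y = 2 ∨ F y = 3) : G (y ^ 4) = 5 := by
  obtain ⟨a, ha⟩ := h.exists_G_eq_four
  have ha0 := h.ne_zero_of_G_eq ha (by decide)
  have hy0 := h.ne_zero_of_F_eq hy
  have key := h.G_div_eq_five (h.G_sq_eq_five_of_G_eq_four ha)
    (h.G_pow_eq_five (h.G_div_sq_eq_five ha hy) 2)
  rwa [show a ^ 2 / (a / y ^ 2) ^ 2 = y ^ 4 by field_simp] at key

end AxisLineRules

lemma exists_linePoint_eq {α : Type*} {Γ : OnePoint ℂ → α} {d : ℂ} (hd : d.im ≠ 0) {j : α}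
    (hj : j ∈ Γ '' ((fun z : ℂ => (z : OnePoint ℂ)) '' {z : ℂ | ∃ t : ℝ, z = (t : ℂ) * d} ∪ {∞}))
    (hinf : Γ ∞ ≠ j) : ∃ s, Γ (linePoint d s) = j := by
  obtain ⟨z, ⟨w, ⟨t, rfl⟩, rfl⟩ | rfl, hz⟩ := hj
  · exact ⟨signedNorm (t * d), by rwa [linePoint_signedNorm hd]⟩
  · exact absurd hz hinf

lemma AxisLineRules.of_coloring {Γ : OnePoint ℂ → ℕ} (hfin : (Set.range Γ).Finite)
    (h3 : ∀ S, IsGenCircle S → (Γ '' S).ncard ≤ 3)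
    (h0 : Γ ((0 : ℂ) : OnePoint ℂ) = 1) (hinf : Γ ∞ = 1) (h1 : Γ ((1 : ℂ) : OnePoint ℂ) = 5)
    (h4 : ∃ x : ℝ, Γ (x : ℂ) = 4)
    (hX : Γ '' ((fun z : ℂ => (z : OnePoint ℂ)) '' {z : ℂ | z.im = 0} ∪ {∞}) = {1, 4, 5})
    {d : ℂ} (hd : d.im ≠ 0)
    (hL : Γ '' ((fun z : ℂ => (z : OnePoint ℂ)) '' {z : ℂ | ∃ t : ℝ, z = (t : ℂ) * d} ∪ {∞}) =
      {1, 2, 3}) :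
    AxisLineRules (fun x : ℝ => Γ (x : ℂ)) (fun s => Γ (linePoint d s)) where
  G_zero := by simpa using h0
  G_one := by simpa using h1
  F_zero := by simpa [linePoint_zero] using h0
  exists_G_eq_four := h4
  exists_F_eq_two := exists_linePoint_eq hd (by rw [hL]; simp) (by simp [hinf])
  exists_F_eq_three := exists_linePoint_eq hd (by rw [hL]; simp) (by simp [hinf])
  G_inv := inversionInvariant_axis hfin h3 hd (A := {1, 4, 5})
    (fun x => hX ▸ ⟨_, Or.inl ⟨x, Complex.ofReal_im x, rfl⟩, rfl⟩)
    (by decide) (by decide) (by decide)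
  F_inv := inversionInvariant_line hfin h3 hd (A := {1, 2, 3})
    (fun s => hL ▸ ⟨_, Or.inl ⟨_, ⟨_, rfl⟩, rfl⟩, rfl⟩) (by decide) (by decide) (by decide)

theorem group_structure_claim_general
    (Γ : OnePoint ℂ → ℕ)
    (hrange : Set.range Γ = {1, 2, 3, 4, 5})
    (h3 : ∀ S : Set (OnePoint ℂ), IsGenCircle S → (Γ '' S).ncard ≤ 3)
    (h0 : Γ ((0 : ℂ) : OnePoint ℂ) = 1) (hinf : Γ ∞ = 1)
    (h1 : Γ ((1 : ℂ) : OnePoint ℂ) = 5)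
    (hneg : ∃ x : ℝ, x < 0 ∧ Γ (((x : ℂ)) : OnePoint ℂ) = 4)
    (hX : Γ '' ((fun z : ℂ => (z : OnePoint ℂ)) '' {z : ℂ | z.im = 0} ∪ {∞}) = {1, 4, 5})
    (d : ℂ) (hdim : d.im ≠ 0)
    (hL : Γ '' ((fun z : ℂ => (z : OnePoint ℂ)) '' {z : ℂ | ∃ t : ℝ, z = (t : ℂ) * d} ∪ {∞}) =
      {1, 2, 3}) :
    (∀ x ∈ xAxisColorSet Γ 5, x ≠ 0) ∧
    (1 : ℝ) ∈ xAxisColorSet Γ 5 ∧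
    (∀ x ∈ xAxisColorSet Γ 5, ∀ y ∈ xAxisColorSet Γ 5, x * y ∈ xAxisColorSet Γ 5) ∧
    (∀ x ∈ xAxisColorSet Γ 5, x⁻¹ ∈ xAxisColorSet Γ 5) ∧
    (∃ a : ℝ, a ≠ 0 ∧ lineColorSet Γ d 2 = (fun g => a * g) '' xAxisColorSet Γ 5) ∧
    (∃ b : ℝ, b ≠ 0 ∧ lineColorSet Γ d 3 = (fun g => b * g) '' xAxisColorSet Γ 5) ∧
    (∃ c : ℝ, c ≠ 0 ∧ xAxisColorSet Γ 4 = (fun g => c * g) '' xAxisColorSet Γ 5) ∧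
    (∀ x ∈ xAxisColorSet Γ 4 ∪ lineColorSet Γ d 2 ∪ lineColorSet Γ d 3,
      x ^ 4 ∈ xAxisColorSet Γ 5) := by
  have h := AxisLineRules.of_coloring (hrange ▸ Set.toFinite _) h3 h0 hinf h1
    (hneg.imp fun _ => And.right) hX hdim hL
  obtain ⟨a, ha⟩ := h.exists_G_eq_four
  obtain ⟨u, hu⟩ := h.exists_F_eq_two
  obtain ⟨v, hv⟩ := h.exists_F_eq_three
  simp only [xAxisColorSet_eq, lineColorSet_eq Γ hdim]
  refine ⟨fun x hx => h.ne_zero_of_G_eq hx (by decide), h.G_one,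
    fun x hx y hy => h.G_mul_eq_five hx hy, fun x hx => h.G_inv_eq_five hx,
    ⟨u, h.ne_zero_of_F_eq (Or.inl hu), h.setOf_F_eq (Or.inl rfl) hu⟩,
    ⟨v, h.ne_zero_of_F_eq (Or.inr hv), h.setOf_F_eq (Or.inr rfl) hv⟩,
    ⟨a, h.ne_zero_of_G_eq ha (by decide), h.setOf_G_eq_four ha⟩, ?_⟩
  rintro x ((hx | hx) | hx)
  · exact h.G_pow_four_of_G_eq_four hx
  · exact h.G_pow_four_of_F_eq (Or.inl hx)
  · exact h.G_pow_four_of_F_eq (Or.inr hx)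

/-- Claim 4 of the `n = 2` proof: `X₅` is a subgroup of the multiplicative group `ℝ^×`,
the sets `Y₂`, `Y₃`, `X₄` are cosets of `X₅` in `ℝ^×`, and the fourth power of every element
of `X₄ ∪ Y₂ ∪ Y₃` lies in `X₅`. -/
theorem group_structure_claim
    (Γ : OnePoint ℂ → ℕ)
    (hrange : Set.range Γ = {1, 2, 3, 4, 5})
    (h3 : ∀ S : Set (OnePoint ℂ), IsGenCircle S → (Γ '' S).ncard ≤ 3)
    (h0 : Γ ((0 : ℂ) : OnePoint ℂ) = 1) (hinf : Γ ∞ = 1)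
    (h1 : Γ ((1 : ℂ) : OnePoint ℂ) = 5)
    (hneg : ∃ x : ℝ, x < 0 ∧ Γ (((x : ℂ)) : OnePoint ℂ) = 4)
    (hX : Γ '' ((fun z : ℂ => (z : OnePoint ℂ)) '' {z : ℂ | z.im = 0} ∪ {∞}) = {1, 4, 5})
    (d : ℂ) (hd : d ≠ 0) (hdim : d.im ≠ 0)
    (hL : Γ '' ((fun z : ℂ => (z : OnePoint ℂ)) '' {z : ℂ | ∃ t : ℝ, z = (t : ℂ) * d} ∪ {∞}) =
      {1, 2, 3}) :
    (∀ x ∈ xAxisColorSet Γ 5, x ≠ 0) ∧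
    (1 : ℝ) ∈ xAxisColorSet Γ 5 ∧
    (∀ x ∈ xAxisColorSet Γ 5, ∀ y ∈ xAxisColorSet Γ 5, x * y ∈ xAxisColorSet Γ 5) ∧
    (∀ x ∈ xAxisColorSet Γ 5, x⁻¹ ∈ xAxisColorSet Γ 5) ∧
    (∃ a : ℝ, a ≠ 0 ∧ lineColorSet Γ d 2 = (fun g => a * g) '' xAxisColorSet Γ 5) ∧
    (∃ b : ℝ, b ≠ 0 ∧ lineColorSet Γ d 3 = (fun g => b * g) '' xAxisColorSet Γ 5) ∧
    (∃ c : ℝ, c ≠ 0 ∧ xAxisColorSet Γ 4 = (fun g => c * g) '' xAxisColorSet Γ 5) ∧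
    (∀ x ∈ xAxisColorSet Γ 4 ∪ lineColorSet Γ d 2 ∪ lineColorSet Γ d 3,
      x ^ 4 ∈ xAxisColorSet Γ 5) :=
  group_structure_claim_general Γ hrange h3 h0 hinf h1 hneg hX d hdim hL
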